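/- arXiv:1209.3917 — 7 statements merged into one kernel-verified Lean document; each statement's English description precedes it below -/
import Mathlib

section
/- Let G be a finite group, n ≥ 1, and let ρ : G →* Matrix (Fin n) (Fin n) ℂ be an irreducible unitary representation. Then for every matrix M : Matrix (Fin n) (Fin n) ℂ, ∑_{g ∈ G} (trace (ρ(g⁻¹) * M)) • ρ(g) = (|G| / n) • M. (Equivalently, ρ ∘ ρ† = (|G|/n) · id on the matrix algebra, where ρ† is the adjoint of the linear extension of ρ to the group algebra.) -/
open Matrix BigOperators

/-- A matrix representation is unitary if every `ρ g` is a unitary matrix. -/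
def IsUnitaryRep {G : Type*} [Group G] {n : ℕ}
    (ρ : G →* Matrix (Fin n) (Fin n) ℂ) : Prop :=
  ∀ g : G, (ρ g)ᴴ * ρ g = 1

/-- A matrix representation is irreducible if the only subspaces of `ℂⁿ`
invariant under every `ρ g` are the zero subspace and the whole space. -/
def IsIrreducibleRep {G : Type*} [Group G] {n : ℕ}
    (ρ : G →* Matrix (Fin n) (Fin n) ℂ) : Prop :=
  ∀ W : Submodule ℂ (Fin n → ℂ),
    (∀ g : G, ∀ v ∈ W, (ρ g).mulVec v ∈ W) → W = ⊥ ∨ W = ⊤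

/-- Schur's lemma in matrix form. -/
lemma schur_aux {G : Type*} [Group G] {n : ℕ} (hn : 1 ≤ n)
    (ρ : G →* Matrix (Fin n) (Fin n) ℂ) (hi : IsIrreducibleRep ρ)
    (A : Matrix (Fin n) (Fin n) ℂ) (hA : ∀ g, ρ g * A = A * ρ g) :
    ∃ c : ℂ, A = c • 1 := by
  haveI : NeZero n := ⟨by omega⟩
  haveI : Nontrivial (Fin n → ℂ) := Function.nontrivial
  obtain ⟨μ, hμ⟩ := Module.End.exists_eigenvalue (Matrix.toLin' A)
  obtain ⟨v, hveig⟩ := hμ.exists_hasEigenvector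
  refine ⟨μ, ?_⟩
  set B := A - μ • (1 : Matrix (Fin n) (Fin n) ℂ) with hB
  have hcomm : ∀ g, ρ g * B = B * ρ g := by
    intro g
    simp [hB, Matrix.mul_sub, Matrix.sub_mul, hA g, Matrix.mul_smul, Matrix.smul_mul]
  set W := LinearMap.ker (Matrix.toLin' B) with hW
  have hinv : ∀ g : G, ∀ x ∈ W, (ρ g).mulVec x ∈ W := by
    intro g x hx
    simp only [hW, LinearMap.mem_ker, Matrix.toLin'_apply] at hx ⊢
    rw [Matrix.mulVec_mulVec, ← hcomm g, ← Matrix.mulVec_mulVec, hx, Matrix.mulVec_zero]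
  rcases hi W hinv with h | h
  · exfalso
    have hvW : v ∈ W := by
      simp only [hW, LinearMap.mem_ker, Matrix.toLin'_apply, hB, Matrix.sub_mulVec,
        Matrix.smul_mulVec, Matrix.one_mulVec]
      have := hveig.apply_eq_smul
      rw [Matrix.toLin'_apply] at this
      rw [this]
      simp
    rw [h] at hvW
    exact hveig.2 (by simpa using hvW)
  · have h0 : Matrix.toLin' B = 0 := LinearMap.ker_eq_top.mp h
    have hB0 : B = 0 :=
      Matrix.toLin'.injective (by simpa using h0)
    exact sub_eq_zero.mp hB0

/-- Schur orthogonality, matrix form. -/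
lemma orth_aux {G : Type*} [Group G] [Fintype G] {n : ℕ} (hn : 1 ≤ n)
    (ρ : G →* Matrix (Fin n) (Fin n) ℂ) (hi : IsIrreducibleRep ρ) (a b : Fin n) :
    ∑ g : G, ρ g * Matrix.single a b 1 * ρ g⁻¹
      = (((Fintype.card G : ℂ) / (n : ℂ)) * (if a = b then 1 else 0)) • 1 := by
  set X := Matrix.single a b (1 : ℂ) with hX
  set T := ∑ g : G, ρ g * X * ρ g⁻¹ with hT
  have hmulinv : ∀ g : G, ρ g⁻¹ * ρ g = 1 := fun g => by
    rw [← _root_.map_mul, inv_mul_cancel, _root_.map_one]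
  have hcomm : ∀ h : G, ρ h * T = T * ρ h := by
    intro h
    rw [hT, Finset.mul_sum, Finset.sum_mul]
    refine Fintype.sum_equiv (Equiv.mulLeft h) _ _ (fun g => ?_)
    simp only [Equiv.coe_mulLeft]
    rw [_root_.mul_inv_rev, _root_.map_mul, _root_.map_mul]
    have key : ρ g⁻¹ * ρ h⁻¹ * ρ h = ρ g⁻¹ := by
      rw [mul_assoc, hmulinv, mul_one]
    calc ρ h * (ρ g * X * ρ g⁻¹) = ρ h * ρ g * X * (ρ g⁻¹ * ρ h⁻¹ * ρ h) := by
          rw [key]; noncomm_ring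
      _ = ρ h * ρ g * X * (ρ g⁻¹ * ρ h⁻¹) * ρ h := by noncomm_ring
  obtain ⟨c, hc⟩ := schur_aux hn ρ hi T (fun g => hcomm g)
  have htrX : Matrix.trace X = (if a = b then 1 else 0 : ℂ) := by
    by_cases hab : a = b
    · simp [hX, hab, Matrix.trace, Matrix.diag, Matrix.single,
        Finset.sum_ite_eq, eq_comm]
    · have hemp : Finset.filter (fun x => a = x ∧ b = x) Finset.univ = (∅ : Finset (Fin n)) := by
        ext x
        simp only [Finset.mem_filter, Finset.mem_univ, true_and, Finset.notMem_empty,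
          iff_false, not_and]
        rintro rfl h
        exact hab h.symm
      simp [hX, hab, Matrix.trace, Matrix.diag, Matrix.single, hemp]
  have htrT : Matrix.trace T = (Fintype.card G : ℂ) * (if a = b then 1 else 0) := by
    rw [hT, Matrix.trace_sum]
    have : ∀ g : G, Matrix.trace (ρ g * X * ρ g⁻¹) = Matrix.trace X := by
      intro g
      rw [Matrix.trace_mul_comm, ← mul_assoc, hmulinv, one_mul]
    rw [Finset.sum_congr rfl (fun g _ => this g), htrX]
    simp [mul_comm]
  have hn0 : (n : ℂ) ≠ 0 := Nat.cast_ne_zero.mpr (by omega)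
  have htrc : Matrix.trace (c • (1 : Matrix (Fin n) (Fin n) ℂ)) = c * n := by
    simp [Matrix.trace_smul, Matrix.trace_one, mul_comm]
  rw [hc, htrc] at htrT
  have hceq : c = (Fintype.card G : ℂ) / n * (if a = b then 1 else 0) := by
    by_cases hab : a = b
    · simp only [hab, if_true, mul_one] at htrT ⊢
      field_simp
      linear_combination htrT
    · simp only [hab, if_false, mul_zero] at htrT ⊢
      rcases mul_eq_zero.mp htrT with h | h
      · exact h
      · exact absurd h hn0
  rw [hc, hceq]

/-- Schur orthogonality, entrywise form. -/
lemma orth_aux' {G : Type*} [Group G] [Fintype G] {n : ℕ} (hn : 1 ≤ n)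
    (ρ : G →* Matrix (Fin n) (Fin n) ℂ) (hi : IsIrreducibleRep ρ)
    (a b : Fin n) (i l : Fin n) :
    ∑ g : G, ρ g i a * ρ g⁻¹ b l
      = ((Fintype.card G : ℂ) / (n : ℂ)) * (if a = b then 1 else 0)
        * (if i = l then 1 else 0) := by
  have h : ((∑ g : G, ρ g * Matrix.single a b 1 * ρ g⁻¹ :
      Matrix (Fin n) (Fin n) ℂ)) i l
      = ((((Fintype.card G : ℂ) / (n : ℂ)) * (if a = b then 1 else 0)) •
        (1 : Matrix (Fin n) (Fin n) ℂ)) i l := by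
    rw [orth_aux hn ρ hi a b]
  have hL : ((∑ g : G, ρ g * Matrix.single a b 1 * ρ g⁻¹ :
      Matrix (Fin n) (Fin n) ℂ)) i l
      = ∑ g : G, ρ g i a * ρ g⁻¹ b l := by
    rw [Matrix.sum_apply]
    refine Finset.sum_congr rfl (fun g _ => ?_)
    rw [Matrix.mul_apply]
    rw [Finset.sum_eq_single b]
    · simp
    · intro k _ hk
      simp [hk]
    · intro hb
      exact absurd (Finset.mem_univ b) hb
  have hR : ((((Fintype.card G : ℂ) / (n : ℂ)) * (if a = b then 1 else 0)) •
      (1 : Matrix (Fin n) (Fin n) ℂ)) i l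
      = ((Fintype.card G : ℂ) / (n : ℂ)) * (if a = b then 1 else 0)
        * (if i = l then 1 else 0) := by
    by_cases hil : i = l <;> simp [hil, Matrix.one_apply]
  rw [hL, hR] at h
  exact h

theorem stmt0 {G : Type*} [Group G] [Fintype G] {n : ℕ} (hn : 1 ≤ n)
    (ρ : G →* Matrix (Fin n) (Fin n) ℂ)
    (hu : IsUnitaryRep ρ) (hi : IsIrreducibleRep ρ)
    (M : Matrix (Fin n) (Fin n) ℂ) :
    ∑ g : G, (Matrix.trace (ρ g⁻¹ * M)) • ρ g
      = ((Fintype.card G : ℂ) / (n : ℂ)) • M := by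
  ext i j
  rw [Matrix.sum_apply]
  simp only [Matrix.smul_apply, smul_eq_mul]
  calc ∑ g : G, Matrix.trace (ρ g⁻¹ * M) * ρ g i j
      = ∑ g : G, ∑ k : Fin n, ∑ m : Fin n, M m k * (ρ g i j * ρ g⁻¹ k m) := by
        refine Finset.sum_congr rfl (fun g _ => ?_)
        rw [Matrix.trace, Finset.sum_mul]
        refine Finset.sum_congr rfl (fun k _ => ?_)
        rw [Matrix.diag, Matrix.mul_apply, Finset.sum_mul]
        refine Finset.sum_congr rfl (fun m _ => ?_)
        ring
    _ = ∑ k : Fin n, ∑ m : Fin n, M m k * ∑ g : G, ρ g i j * ρ g⁻¹ k m := by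
        rw [Finset.sum_comm]
        refine Finset.sum_congr rfl (fun k _ => ?_)
        rw [Finset.sum_comm]
        refine Finset.sum_congr rfl (fun m _ => ?_)
        rw [Finset.mul_sum]
    _ = ∑ k : Fin n, ∑ m : Fin n, M m k *
          (((Fintype.card G : ℂ) / (n : ℂ)) * (if j = k then 1 else 0)
            * (if i = m then 1 else 0)) := by
        refine Finset.sum_congr rfl (fun k _ => Finset.sum_congr rfl (fun m _ => ?_))
        rw [orth_aux' hn ρ hi j k i m]
    _ = ((Fintype.card G : ℂ) / (n : ℂ)) * M i j := by
        simp only [mul_ite, mul_one, mul_zero, ite_mul, zero_mul,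
          Finset.sum_ite_eq, Finset.sum_ite_eq', Finset.mem_univ, if_true]
        ring
end

section
/- Let G be a finite group and ρ : G →* Matrix (Fin n) (Fin n) ℂ an irreducible unitary representation. Then the map ρ† : Matrix (Fin n) (Fin n) ℂ → MonoidAlgebra ℂ G defined by ρ†(M) = ∑_{g ∈ G} (trace (ρ(g)ᴴ * M)) • (MonoidAlgebra.single g 1) is injective. -/
open Matrix BigOperators

/-- The adjoint `ρ†` of the linear extension of `ρ` to the group algebra:
`ρ†(M) = ∑ g, trace(ρ(g)ᴴ * M) • single g 1`. -/
noncomputable def rhoDag {G : Type*} [Group G] [Fintype G] {n : ℕ}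
    (ρ : G →* Matrix (Fin n) (Fin n) ℂ)
    (M : Matrix (Fin n) (Fin n) ℂ) : MonoidAlgebra ℂ G :=
  ∑ g : G, (Matrix.trace ((ρ g)ᴴ * M)) • MonoidAlgebra.single g (1 : ℂ)

/-! Schur's lemma makes every average `∑ g, ρ g * X * ρ g⁻¹` a scalar matrix. Taking `X` a
matrix unit gives the orthogonality relations for matrix coefficients, hence the inversion
formula `∑ g, trace (N * ρ g) • ρ g⁻¹ = (|G| / n) • N`, so a matrix `N` with
`trace (N * ρ g) = 0` for all `g` vanishes. The coefficients of `ρ† M` are the conjugates of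
`trace (Mᴴ * ρ g)`. -/

namespace IsIrreducibleRep

variable {G : Type*} [Group G] {n : ℕ} {ρ : G →* Matrix (Fin n) (Fin n) ℂ}

theorem eq_smul_one_of_commute (hi : IsIrreducibleRep ρ) {T : Matrix (Fin n) (Fin n) ℂ}
    (hT : ∀ g, Commute (ρ g) T) : ∃ c : ℂ, T = c • 1 := by
  rcases isEmpty_or_nonempty (Fin n) with _ | _
  · exact ⟨0, Subsingleton.elim _ _⟩
  obtain ⟨c, hc⟩ := Module.End.exists_eigenvalue (toLin' T)
  set E := Module.End.eigenspace (toLin' T) c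
  have hinv : ∀ g, ∀ v ∈ E, ρ g *ᵥ v ∈ E := fun g v hv =>
    Module.End.mapsTo_genEigenspace_of_comm
      ((hT g).map (toLinAlgEquiv' (R := ℂ) (n := Fin n))).symm c 1 hv
  have htop := (hi _ hinv).resolve_left hc
  refine ⟨c, toLin'.injective (LinearMap.ext fun v => ?_)⟩
  have hv : v ∈ E := htop ▸ Submodule.mem_top
  simpa [Matrix.smul_mulVec] using Module.End.mem_eigenspace_iff.mp hv

variable [Fintype G]

theorem sum_conj_eq_smul_one (hi : IsIrreducibleRep ρ) (X : Matrix (Fin n) (Fin n) ℂ) :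
    ∑ g, ρ g * X * ρ g⁻¹ = (Fintype.card G * X.trace / n : ℂ) • 1 := by
  rcases isEmpty_or_nonempty (Fin n) with _ | _
  · exact Subsingleton.elim _ _
  set T := ∑ g, ρ g * X * ρ g⁻¹
  have hcomm : ∀ h, Commute (ρ h) T := fun h => by
    have hinv : ρ h⁻¹ * ρ h = 1 := by rw [← map_mul, inv_mul_cancel, map_one]
    simp only [Commute, SemiconjBy, T, Finset.mul_sum, Finset.sum_mul]
    refine Fintype.sum_equiv (Equiv.mulLeft h) _ _ fun g => ?_
    simp only [Equiv.coe_mulLeft, _root_.mul_inv_rev, map_mul, mul_assoc, hinv, mul_one]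
  obtain ⟨c, hc⟩ := hi.eq_smul_one_of_commute hcomm
  have htrace : T.trace = Fintype.card G * X.trace := by
    have hconj : ∀ g, (ρ g * X * ρ g⁻¹).trace = X.trace := fun g => by
      rw [trace_mul_cycle, ← map_mul, inv_mul_cancel, map_one, one_mul]
    simp only [T, trace_sum, hconj, Finset.sum_const, Finset.card_univ, nsmul_eq_mul]
  have hn : (n : ℂ) ≠ 0 := Nat.cast_ne_zero.mpr (Fin.pos_iff_nonempty.mpr ‹_›).ne'
  rw [hc, trace_smul, trace_one, Fintype.card_fin, smul_eq_mul] at htrace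
  rw [hc, ← htrace, mul_div_cancel_right₀ _ hn]

theorem sum_apply_mul_inv_apply (hi : IsIrreducibleRep ρ) (i j k l : Fin n) :
    ∑ g, ρ g i j * ρ g⁻¹ k l =
      if j = k ∧ i = l then (Fintype.card G / n : ℂ) else 0 := by
  have hentry : ∀ g, (ρ g * single j k (1 : ℂ) * ρ g⁻¹) i l = ρ g i j * ρ g⁻¹ k l :=
    fun g => by
    simp [mul_apply, single_apply, ite_and, Finset.sum_ite_eq]
  have htrace : (single j k (1 : ℂ)).trace = if j = k then 1 else 0 := by
    split_ifs with h
    · simp [h]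
    · exact trace_single_eq_of_ne _ _ _ h
  have h := congrFun₂ (hi.sum_conj_eq_smul_one (single j k 1)) i l
  simp only [Matrix.sum_apply, hentry, htrace, Matrix.smul_apply, one_apply] at h
  rw [h]
  split_ifs <;> simp_all

theorem sum_trace_mul_smul_inv (hi : IsIrreducibleRep ρ) (N : Matrix (Fin n) (Fin n) ℂ) :
    ∑ g, (N * ρ g).trace • ρ g⁻¹ = (Fintype.card G / n : ℂ) • N := by
  ext k l
  calc (∑ g, (N * ρ g).trace • ρ g⁻¹) k l
      = ∑ a, ∑ b, N a b * ∑ g, ρ g b a * ρ g⁻¹ k l := by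
        simp only [Matrix.sum_apply, Matrix.smul_apply, trace, diag, mul_apply, smul_eq_mul,
          Finset.sum_mul, Finset.mul_sum, mul_assoc]
        rw [Finset.sum_comm]
        exact Finset.sum_congr rfl fun a _ => Finset.sum_comm
    _ = ∑ a, ∑ b, N a b * if a = k ∧ b = l then (Fintype.card G / n : ℂ) else 0 := by
        simp only [hi.sum_apply_mul_inv_apply]
    _ = ((Fintype.card G / n : ℂ) • N) k l := by
        simp [ite_and, mul_comm]

theorem eq_zero_of_forall_trace_mul_eq_zero (hi : IsIrreducibleRep ρ)
    {N : Matrix (Fin n) (Fin n) ℂ} (hN : ∀ g, (N * ρ g).trace = 0) : N = 0 := by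
  rcases isEmpty_or_nonempty (Fin n) with _ | _
  · exact Subsingleton.elim _ _
  have hscalar : (Fintype.card G / n : ℂ) ≠ 0 :=
    div_ne_zero (Nat.cast_ne_zero.mpr Fintype.card_ne_zero)
      (Nat.cast_ne_zero.mpr (Fin.pos_iff_nonempty.mpr ‹_›).ne')
  have h := hi.sum_trace_mul_smul_inv N
  simp only [hN, zero_smul, Finset.sum_const_zero] at h
  exact (smul_eq_zero.mp h.symm).resolve_left hscalar

end IsIrreducibleRep

theorem coeff_rhoDag_apply {G : Type*} [Group G] [Fintype G] {n : ℕ}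
    (ρ : G →* Matrix (Fin n) (Fin n) ℂ) (M : Matrix (Fin n) (Fin n) ℂ) (g : G) :
    (rhoDag ρ M).coeff g = ((ρ g)ᴴ * M).trace := by
  classical
  simp [rhoDag, Finsupp.single_apply]

theorem stmt8_general {G : Type*} [Group G] [Fintype G] {n : ℕ}
    (ρ : G →* Matrix (Fin n) (Fin n) ℂ)
    (hi : IsIrreducibleRep ρ) :
    Function.Injective (rhoDag ρ) := by
  intro M N hMN
  have hcoeff : ∀ g, ((ρ g)ᴴ * (M - N)).trace = 0 := fun g => by
    rw [mul_sub, trace_sub, ← coeff_rhoDag_apply, ← coeff_rhoDag_apply, hMN, sub_self]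
  have hstar : (M - N)ᴴ = 0 := hi.eq_zero_of_forall_trace_mul_eq_zero fun g => by
    rw [← conjTranspose_conjTranspose (ρ g), ← conjTranspose_mul, trace_conjTranspose, hcoeff,
      star_zero]
  exact sub_eq_zero.mp (conjTranspose_eq_zero.mp hstar)

theorem stmt8 {G : Type*} [Group G] [Fintype G] {n : ℕ}
    (ρ : G →* Matrix (Fin n) (Fin n) ℂ)
    (hu : IsUnitaryRep ρ) (hi : IsIrreducibleRep ρ) :
    Function.Injective (rhoDag ρ) :=
  stmt8_general ρ hi
end

section
/- Let G be a finite group, n ≥ 1, and ρ : G →* Matrix (Fin n) (Fin n) ℂ an irreducible unitary representation. Let ρ̂ : MonoidAlgebra ℂ G → Matrix (Fin n) (Fin n) ℂ be the linear extension of ρ (sending MonoidAlgebra.single g 1 to ρ(g)), and let ρ† : Matrix (Fin n) (Fin n) ℂ → MonoidAlgebra ℂ G be defined by ρ†(M) = ∑_{g ∈ G} (trace (ρ(g)ᴴ * M)) • (MonoidAlgebra.single g 1). Then the linear map E : MonoidAlgebra ℂ G → MonoidAlgebra ℂ G given by E(x) = (n / |G|) • ρ†(ρ̂(x)) is idempotent: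 E ∘ E = E. (Hence √(n/|G|) · ρ̂ is a partial isometry defining one outcome of a projective measurement on the group algebra.) -/
open Matrix BigOperators

/-- The linear extension `ρ̂` of `ρ` to the group algebra,
sending `MonoidAlgebra.single g 1` to `ρ g`. -/
noncomputable def rhoHat {G : Type*} [Group G] [Fintype G] {n : ℕ}
    (ρ : G →* Matrix (Fin n) (Fin n) ℂ)
    (x : MonoidAlgebra ℂ G) : Matrix (Fin n) (Fin n) ℂ :=
  ∑ g : G, x.coeff g • ρ g

/-!
Averaging `A ↦ ∑ g, ρ g * A * ρ g⁻¹` produces a matrix commuting with every `ρ h`, hence a scalar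
by Schur's lemma, and the scalar is read off from the trace:
`n • ∑ g, ρ g * A * ρ g⁻¹ = (|G| * tr A) • 1`. Applied to matrix units this gives the Schur
orthogonality relations, which, since `(ρ g)ᴴ = ρ g⁻¹`, say exactly that
`n • ρ̂ (ρ† M) = |G| • M`. Hence `E ∘ E = (n/|G|)² • ρ† ∘ (ρ̂ ∘ ρ†) ∘ ρ̂ = E`.
-/

section

variable {G : Type*} [Group G] {n : ℕ} {ρ : G →* Matrix (Fin n) (Fin n) ℂ}

theorem IsUnitaryRep.conjTranspose_eq (hu : IsUnitaryRep ρ) (g : G) : (ρ g)ᴴ = ρ g⁻¹ := by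
  rw [← one_mul (ρ g⁻¹), ← hu g, mul_assoc, ← map_mul, mul_inv_cancel, map_one, mul_one]

theorem IsIrreducibleRep.exists_eq_smul_one_of_commute (hi : IsIrreducibleRep ρ)
    {T : Matrix (Fin n) (Fin n) ℂ} (hT : ∀ g, Commute (ρ g) T) : ∃ c : ℂ, T = c • 1 := by
  cases isEmpty_or_nonempty (Fin n)
  · exact ⟨0, Subsingleton.elim _ _⟩
  obtain ⟨μ, hμ⟩ := Module.End.exists_eigenvalue (toLin' T)
  have hinv : ∀ g, ∀ v ∈ Module.End.eigenspace (toLin' T) μ,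
      ρ g *ᵥ v ∈ Module.End.eigenspace (toLin' T) μ := by
    intro g v hv
    rw [Module.End.mem_eigenspace_iff, toLin'_apply] at hv ⊢
    rw [mulVec_mulVec, ← (hT g).eq, ← mulVec_mulVec, hv, mulVec_smul]
  have htop := (hi _ hinv).resolve_left hμ
  rw [Module.End.eigenspace_def, LinearMap.ker_eq_top, sub_eq_zero] at htop
  exact ⟨μ, toLin'.injective (by rw [htop, map_smul, toLin'_one]; rfl)⟩

variable [Fintype G]

theorem IsIrreducibleRep.natCast_smul_sum_conj (hi : IsIrreducibleRep ρ)
    (A : Matrix (Fin n) (Fin n) ℂ) :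
    (n : ℂ) • ∑ g, ρ g * A * ρ g⁻¹ = ((Fintype.card G : ℂ) * A.trace) • 1 := by
  set S := ∑ g, ρ g * A * ρ g⁻¹ with hS
  have hcomm : ∀ h, Commute (ρ h) S := fun h => by
    simp only [Commute, SemiconjBy, hS, Finset.mul_sum, Finset.sum_mul]
    refine Fintype.sum_equiv (Equiv.mulLeft h) _ _ fun g => ?_
    simp only [Equiv.coe_mulLeft, _root_.mul_inv_rev, map_mul, mul_assoc]
    rw [← map_mul ρ h⁻¹, inv_mul_cancel, map_one, mul_one]
  have htrace : S.trace = Fintype.card G * A.trace := by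
    simp [hS, trace_sum, trace_mul_cycle, ← map_mul]
  obtain ⟨c, hc⟩ := hi.exists_eq_smul_one_of_commute hcomm
  rw [hc, trace_smul, trace_one, Fintype.card_fin, smul_eq_mul] at htrace
  rw [hc, smul_smul, ← htrace, mul_comm]

theorem IsIrreducibleRep.natCast_mul_sum_apply_mul_inv_apply (hi : IsIrreducibleRep ρ)
    (a b i j : Fin n) :
    (n : ℂ) * ∑ g, ρ g a b * ρ g⁻¹ i j =
      Fintype.card G *
        ((1 : Matrix (Fin n) (Fin n) ℂ) b i * (1 : Matrix (Fin n) (Fin n) ℂ) a j) := by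
  have htrace : (single b i (1 : ℂ)).trace = (1 : Matrix (Fin n) (Fin n) ℂ) b i := by
    rcases eq_or_ne b i with rfl | hbi
    · simp [trace_single_eq_same]
    · simp [trace_single_eq_of_ne (h := hbi), one_apply_ne hbi]
  have h := congr_fun₂ (hi.natCast_smul_sum_conj (single b i 1)) a j
  have hentry : ∀ g, (ρ g * single b i (1 : ℂ) * ρ g⁻¹ : Matrix (Fin n) (Fin n) ℂ) a j =
      ρ g a b * ρ g⁻¹ i j := fun g => by
    simp [mul_apply, single_apply, ite_and]
  rw [Matrix.smul_apply, Matrix.sum_apply, Matrix.smul_apply, htrace] at h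
  simpa only [hentry, smul_eq_mul, one_apply, mul_assoc] using h

theorem IsIrreducibleRep.natCast_smul_sum_trace_smul (hu : IsUnitaryRep ρ)
    (hi : IsIrreducibleRep ρ) (M : Matrix (Fin n) (Fin n) ℂ) :
    (n : ℂ) • ∑ g, trace ((ρ g)ᴴ * M) • ρ g = (Fintype.card G : ℂ) • M := by
  ext a b
  calc ((n : ℂ) • ∑ g, trace ((ρ g)ᴴ * M) • ρ g) a b
      = ∑ i, ∑ j, M j i * ((n : ℂ) * ∑ g, ρ g a b * ρ g⁻¹ i j) := by
        simp only [hu.conjTranspose_eq, Matrix.smul_apply, Matrix.sum_apply, trace, diag_apply,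
          mul_apply, smul_eq_mul, Finset.mul_sum, Finset.sum_mul]
        rw [Finset.sum_comm]
        refine Finset.sum_congr rfl fun i _ => ?_
        rw [Finset.sum_comm]
        exact Finset.sum_congr rfl fun j _ => Finset.sum_congr rfl fun g _ => by ring
    _ = ∑ i, ∑ j, M j i * (Fintype.card G *
          ((1 : Matrix (Fin n) (Fin n) ℂ) b i * (1 : Matrix (Fin n) (Fin n) ℂ) a j)) := by
        simp only [hi.natCast_mul_sum_apply_mul_inv_apply]
    _ = ((Fintype.card G : ℂ) • M) a b := by simp [one_apply, mul_comm]

theorem coeff_rhoDag (M : Matrix (Fin n) (Fin n) ℂ) (g : G) :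
    (rhoDag ρ M).coeff g = trace ((ρ g)ᴴ * M) := by
  classical
  simp [rhoDag, MonoidAlgebra.coeff_sum, Finset.sum_apply', Finsupp.single_apply]

theorem rhoDag_smul (c : ℂ) (M : Matrix (Fin n) (Fin n) ℂ) :
    rhoDag ρ (c • M) = c • rhoDag ρ M := by
  simp only [rhoDag, Matrix.mul_smul, trace_smul, Finset.smul_sum, smul_assoc]

theorem rhoHat_smul (c : ℂ) (x : MonoidAlgebra ℂ G) : rhoHat ρ (c • x) = c • rhoHat ρ x := by
  simp only [rhoHat, MonoidAlgebra.coeff_smul_apply, Finset.smul_sum, smul_assoc]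

theorem IsIrreducibleRep.natCast_smul_rhoHat_rhoDag (hu : IsUnitaryRep ρ)
    (hi : IsIrreducibleRep ρ) (M : Matrix (Fin n) (Fin n) ℂ) :
    (n : ℂ) • rhoHat ρ (rhoDag ρ M) = (Fintype.card G : ℂ) • M := by
  simpa only [rhoHat, coeff_rhoDag] using hi.natCast_smul_sum_trace_smul hu M

end

theorem stmt9_general {G : Type*} [Group G] [Fintype G] {n : ℕ}
    (ρ : G →* Matrix (Fin n) (Fin n) ℂ)
    (hu : IsUnitaryRep ρ) (hi : IsIrreducibleRep ρ)
    (x : MonoidAlgebra ℂ G) :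
    ((n : ℂ) / (Fintype.card G : ℂ)) •
        rhoDag ρ (rhoHat ρ (((n : ℂ) / (Fintype.card G : ℂ)) • rhoDag ρ (rhoHat ρ x)))
      = ((n : ℂ) / (Fintype.card G : ℂ)) • rhoDag ρ (rhoHat ρ x) := by
  have hcard : (Fintype.card G : ℂ) ≠ 0 := Nat.cast_ne_zero.mpr Fintype.card_ne_zero
  calc _ = ((n : ℂ) / Fintype.card G ^ 2) •
          rhoDag ρ ((n : ℂ) • rhoHat ρ (rhoDag ρ (rhoHat ρ x))) := by
        rw [rhoHat_smul, rhoDag_smul, rhoDag_smul, smul_smul, smul_smul]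
        congr 1
        field_simp
    _ = _ := by
        rw [hi.natCast_smul_rhoHat_rhoDag hu, rhoDag_smul, smul_smul]
        congr 1
        field_simp

theorem stmt9 {G : Type*} [Group G] [Fintype G] {n : ℕ} (hn : 1 ≤ n)
    (ρ : G →* Matrix (Fin n) (Fin n) ℂ)
    (hu : IsUnitaryRep ρ) (hi : IsIrreducibleRep ρ)
    (x : MonoidAlgebra ℂ G) :
    ((n : ℂ) / (Fintype.card G : ℂ)) •
        rhoDag ρ (rhoHat ρ (((n : ℂ) / (Fintype.card G : ℂ)) • rhoDag ρ (rhoHat ρ x)))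
      = ((n : ℂ) / (Fintype.card G : ℂ)) • rhoDag ρ (rhoHat ρ x) :=
  stmt9_general ρ hu hi x
end

section
/- Let S be a finite nonempty set and f : S → ZMod 2. Define the Deutsch–Jozsa amplitude A = (1 / |S|) · ∑_{s ∈ S} (-1 : ℂ)^{(f s).val}. Then: (i) if f is constant, |A| = 1, so the Deutsch–Jozsa measurement of the query register in the uniform superposition state succeeds with probability |A|² = 1; (ii) if f is balanced, i.e. the sets {s | f s = 0} and {s | f s = 1} have equal cardinality, then A = 0, so the measurement succeeds with probability 0. -/
open BigOperators Finset

lemma ZMod.neg_one_pow_val_two {R : Type*} [Monoid R] [HasDistribNeg R] (x : ZMod 2) :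
    (-1 : R) ^ x.val = if x = 0 then 1 else -1 := by
  obtain rfl | rfl : x = 0 ∨ x = 1 := by revert x; decide
  · simp
  · simp [ZMod.val_one]

lemma ZMod.ne_zero_iff_eq_one_two {x : ZMod 2} : x ≠ 0 ↔ x = 1 := by
  revert x
  decide

lemma Finset.sum_neg_one_pow_zmod_two_val {ι R : Type*} [Ring R] (s : Finset ι)
    (f : ι → ZMod 2) :
    ∑ i ∈ s, (-1 : R) ^ (f i).val = #{i ∈ s | f i = 0} - #{i ∈ s | f i = 1} := by
  simp only [ZMod.neg_one_pow_val_two, sum_ite, sum_const, smul_neg, nsmul_one,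
    ZMod.ne_zero_iff_eq_one_two, sub_eq_add_neg]

theorem stmt11 {S : Type*} [Fintype S] [Nonempty S] (f : S → ZMod 2) :
    ((∀ s s' : S, f s = f s') →
      ‖(1 / (Fintype.card S : ℂ)) * ∑ s : S, (-1 : ℂ) ^ (f s).val‖ = 1) ∧
    ((Finset.univ.filter (fun s : S => f s = 0)).card
        = (Finset.univ.filter (fun s : S => f s = 1)).card →
      (1 / (Fintype.card S : ℂ)) * ∑ s : S, (-1 : ℂ) ^ (f s).val = 0) := by
  constructor
  · intro hconst
    obtain ⟨s₀⟩ := ‹Nonempty S›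
    have hsum : ∑ s : S, (-1 : ℂ) ^ (f s).val = Fintype.card S * (-1 : ℂ) ^ (f s₀).val := by
      simp only [hconst _ s₀, sum_const, card_univ, nsmul_eq_mul]
    rw [hsum, one_div, inv_mul_cancel_left₀ (Nat.cast_ne_zero.mpr Fintype.card_ne_zero),
      norm_pow, norm_neg, norm_one, one_pow]
  · intro hbalanced
    rw [sum_neg_one_pow_zmod_two_val, hbalanced, sub_self, mul_zero]
end

section
/- Let G be a finite group, H a normal subgroup, S a finite set, and f : G → S a function that is constant on cosets of H and distinct on distinct cosets: f g = f g' ↔ (g : G ⧸ H) = (g' : G ⧸ H). Let ρ : G →* Matrix (Fin n) (Fin n) ℂ be an irreducible unitary representation that does not factor through G ⧸ H (i.e., there exists h ∈ H with ρ(h) ≠ 1). Then for every x ∈ S, ∑_{g ∈ G, f g = x} ρ(g) = 0. (Hence in the hidden subgroup algorithm the probability of the measurement returning the representation ρ is zero.) -/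
open Matrix BigOperators

/-- Matrices are determined by their action on vectors. -/
lemma mulVec_ext_aux {n : ℕ} {A B : Matrix (Fin n) (Fin n) ℂ}
    (h : ∀ v, A.mulVec v = B.mulVec v) : A = B := by
  ext i j
  have := congrFun (h (Pi.single j 1)) i
  simpa using this

theorem stmt16 {G : Type*} [Group G] [Fintype G]
    (H : Subgroup G) [H.Normal]
    {S : Type*} [Fintype S] [DecidableEq S]
    (f : G → S)
    (hf : ∀ g g' : G, f g = f g' ↔
      (QuotientGroup.mk g : G ⧸ H) = (QuotientGroup.mk g' : G ⧸ H))
    {n : ℕ} (ρ : G →* Matrix (Fin n) (Fin n) ℂ)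
    (hu : IsUnitaryRep ρ) (hi : IsIrreducibleRep ρ)
    (hnf : ∃ h ∈ H, ρ h ≠ 1)
    (x : S) :
    ∑ g ∈ Finset.univ.filter (fun g : G => f g = x), ρ g = 0 := by
  classical
  obtain ⟨h₀, hh₀, hρh₀⟩ := hnf
  by_cases hex : ∃ g : G, f g = x
  swap
  · push_neg at hex
    rw [Finset.filter_false_of_mem (fun g _ => hex g), Finset.sum_empty]
  obtain ⟨g₀, hg₀⟩ := hex
  set HF : Finset G := Finset.univ.filter (fun g => g ∈ H) with hHF
  have memHF : ∀ g : G, g ∈ HF ↔ g ∈ H := by intro g; simp [hHF]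
  set P : Matrix (Fin n) (Fin n) ℂ := ∑ h ∈ HF, ρ h with hP
  -- the fiber sum equals ρ g₀ * P
  have hfiber : ∑ g ∈ Finset.univ.filter (fun g : G => f g = x), ρ g = ρ g₀ * P := by
    rw [hP, Finset.mul_sum]
    simp_rw [← _root_.map_mul]
    refine (Finset.sum_equiv (Equiv.mulLeft g₀) ?_ ?_).symm
    · intro h
      simp only [memHF, Finset.mem_filter, Finset.mem_univ, true_and,
        Equiv.coe_mulLeft]
      rw [← hg₀, hf, QuotientGroup.eq]
      constructor
      · intro hh
        simpa [mul_assoc] using H.inv_mem hh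
      · intro hh
        simpa [mul_assoc] using H.inv_mem hh
    · intro h _
      rfl
  rw [hfiber]
  -- P commutes with every ρ a
  have hcomm : ∀ a : G, ρ a * P = P * ρ a := by
    intro a
    rw [hP, Finset.mul_sum, Finset.sum_mul]
    simp_rw [← _root_.map_mul]
    refine Finset.sum_equiv ⟨fun h => a * h * a⁻¹, fun h => a⁻¹ * h * a,
      fun h => by group, fun h => by group⟩ ?_ ?_
    · intro h
      simp only [memHF, Equiv.coe_fn_mk]
      constructor
      · intro hh; exact Subgroup.Normal.conj_mem ‹H.Normal› h hh a
      · intro hh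
        have := Subgroup.Normal.conj_mem ‹H.Normal› _ hh a⁻¹
        simpa [mul_assoc] using this
    · intro h _
      simp only [Equiv.coe_fn_mk]
      congr 1
      group
  -- ρ h₀ * P = P
  have habs : ρ h₀ * P = P := by
    rw [hP, Finset.mul_sum]
    simp_rw [← _root_.map_mul]
    refine Finset.sum_equiv (Equiv.mulLeft h₀) ?_ ?_
    · intro h
      simp only [memHF, Equiv.coe_mulLeft]
      exact ⟨fun hh => H.mul_mem hh₀ hh,
        fun hh => by simpa using H.mul_mem (H.inv_mem hh₀) hh⟩
    · intro h _; rfl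
  -- kernel of P is invariant
  have hW := hi (LinearMap.ker P.mulVecLin) ?_
  · rcases hW with hW | hW
    · -- P injective, hence surjective, contradiction with ρ h₀ ≠ 1
      exfalso
      apply hρh₀
      have hinj : Function.Injective P.mulVecLin := by
        rwa [← LinearMap.ker_eq_bot]
      have hsurj := (LinearMap.injective_iff_surjective).mp hinj
      apply mulVec_ext_aux
      intro v
      obtain ⟨u, hu'⟩ := hsurj v
      simp only [Matrix.mulVecLin_apply] at hu'
      calc (ρ h₀).mulVec v = (ρ h₀).mulVec (P.mulVec u) := by rw [hu']
        _ = (ρ h₀ * P).mulVec u := by rw [Matrix.mulVec_mulVec]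
        _ = P.mulVec u := by rw [habs]
        _ = (1 : Matrix (Fin n) (Fin n) ℂ).mulVec v := by rw [hu', Matrix.one_mulVec]
    · -- P = 0
      have : P = 0 := by
        apply mulVec_ext_aux
        intro v
        have : v ∈ LinearMap.ker P.mulVecLin := hW ▸ Submodule.mem_top
        simpa [Matrix.mulVecLin_apply] using this
      rw [this, mul_zero]
  · intro g v hv
    simp only [LinearMap.mem_ker, Matrix.mulVecLin_apply] at hv ⊢
    rw [Matrix.mulVec_mulVec, ← hcomm, ← Matrix.mulVec_mulVec, hv, Matrix.mulVec_zero]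
end

section
/- Let G be a finite group, H a normal subgroup, S a finite set, and f : G → S a function with f g = f g' ↔ (g : G ⧸ H) = (g' : G ⧸ H). Let τ : G ⧸ H →* Matrix (Fin n) (Fin n) ℂ be an irreducible unitary representation of the quotient group, and set ρ = τ ∘ QuotientGroup.mk' : G →* Matrix (Fin n) (Fin n) ℂ. Then the probability of the hidden subgroup measurement returning ρ is (n / |G|²) · ∑_{x ∈ S} trace ((∑_{g ∈ G, f g = x} ρ(g))ᴴ * (∑_{g ∈ G, f g = x} ρ(g))) = n² · |H| / |G|. In particular, a representation factoring through G ⧸ H is measured with probability proportional to the square of its dimension. -/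
open Matrix BigOperators

theorem stmt17 {G : Type*} [Group G] [Fintype G]
    (H : Subgroup G) [H.Normal] [DecidablePred (· ∈ H)]
    {S : Type*} [Fintype S] [DecidableEq S]
    (f : G → S)
    (hf : ∀ g g' : G, f g = f g' ↔
      (QuotientGroup.mk g : G ⧸ H) = (QuotientGroup.mk g' : G ⧸ H))
    {n : ℕ} (τ : (G ⧸ H) →* Matrix (Fin n) (Fin n) ℂ)
    (hu : IsUnitaryRep τ) (hi : IsIrreducibleRep τ)
    (ρ : G →* Matrix (Fin n) (Fin n) ℂ)
    (hρ : ρ = τ.comp (QuotientGroup.mk' H)) :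
    ((n : ℂ) / (Fintype.card G : ℂ) ^ 2) *
        ∑ x : S, Matrix.trace
          ((∑ g ∈ Finset.univ.filter (fun g : G => f g = x), ρ g)ᴴ *
            (∑ g ∈ Finset.univ.filter (fun g : G => f g = x), ρ g))
      = (n : ℂ) ^ 2 * (Fintype.card H : ℂ) / (Fintype.card G : ℂ) := by
  classical
  have hρg : ∀ g : G, ρ g = τ (QuotientGroup.mk g) := by
    intro g; rw [hρ]; rfl
  -- trace of each pairwise product is n
  have htr : ∀ g g' : G, f g = f g' →
      Matrix.trace ((ρ g)ᴴ * ρ g') = (n : ℂ) := by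
    intro g g' h
    have hq := (hf g g').mp h
    rw [hρg, hρg, ← hq, hu (QuotientGroup.mk g), Matrix.trace_one]
    simp
  -- size of each nonempty fiber is |H|
  have hcard : ∀ g : G,
      (Finset.univ.filter (fun g' : G => f g' = f g)).card = Fintype.card H := by
    intro g
    have e : {g' : G // f g' = f g} ≃ H :=
      { toFun := fun x => ⟨g⁻¹ * x.1, by
          have hq := (hf x.1 g).mp x.2
          have : x.1⁻¹ * g ∈ H := (QuotientGroup.eq).mp hq
          simpa using H.inv_mem this⟩
        invFun := fun h => ⟨g * h.1, by
          rw [hf]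
          apply (QuotientGroup.eq).mpr
          simp [H.inv_mem h.2]⟩
        left_inv := fun x => by ext; simp [mul_assoc]
        right_inv := fun h => by ext; simp }
    rw [← Fintype.card_subtype]
    exact Fintype.card_congr e
  -- compute each summand
  have key : ∀ x : S,
      Matrix.trace
        ((∑ g ∈ Finset.univ.filter (fun g : G => f g = x), ρ g)ᴴ *
          (∑ g ∈ Finset.univ.filter (fun g : G => f g = x), ρ g))
      = ((Finset.univ.filter (fun g : G => f g = x)).card : ℂ) *
          (Fintype.card H : ℂ) * (n : ℂ) := by
    intro x
    rw [Matrix.conjTranspose_sum, Matrix.sum_mul]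
    rw [Matrix.trace_sum]
    have : ∀ g ∈ Finset.univ.filter (fun g : G => f g = x),
        Matrix.trace ((ρ g)ᴴ * ∑ g' ∈ Finset.univ.filter (fun g' : G => f g' = x), ρ g')
          = (Fintype.card H : ℂ) * (n : ℂ) := by
      intro g hg
      rw [Matrix.mul_sum, Matrix.trace_sum]
      have hgx : f g = x := (Finset.mem_filter.mp hg).2
      have : ∀ g' ∈ Finset.univ.filter (fun g' : G => f g' = x),
          Matrix.trace ((ρ g)ᴴ * ρ g') = (n : ℂ) := by
        intro g' hg'
        exact htr g g' (hgx.trans (Finset.mem_filter.mp hg').2.symm)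
      rw [Finset.sum_congr rfl this, Finset.sum_const, nsmul_eq_mul]
      have hfx : (Finset.univ.filter (fun g' : G => f g' = x)) =
          (Finset.univ.filter (fun g' : G => f g' = f g)) := by
        apply Finset.filter_congr; intro g' _; simp [hgx]
      rw [hfx, hcard g]
    rw [Finset.sum_congr rfl this, Finset.sum_const, nsmul_eq_mul]
    ring
  rw [Finset.sum_congr rfl (fun x _ => key x)]
  rw [← Finset.sum_mul, ← Finset.sum_mul, ← Nat.cast_sum]
  have hpart : ∑ x : S, (Finset.univ.filter (fun g : G => f g = x)).card
      = Fintype.card G := by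
    rw [← Finset.card_eq_sum_card_fiberwise (fun g _ => Finset.mem_univ (f g))]
    rfl
  rw [hpart]
  have hG : (Fintype.card G : ℂ) ≠ 0 := Nat.cast_ne_zero.mpr Fintype.card_ne_zero
  field_simp
end

section
/- Let S and T be finite sets and F : Matrix T S ℂ a matrix satisfying the comonoid homomorphism conditions: (i) for all s ∈ S and t, t' ∈ T, F t s * F t' s = if t = t' then F t s else 0 (F intertwines the copying maps of the canonical bases), and (ii) for every s ∈ S, ∑_{t ∈ T} F t s = 1 (F intertwines the deleting maps). Then there exists a function f : S → T such that F t s = if t = f s then 1 else 0 for all t, s; that is, the linear maps ℂ[S] → ℂ[T] that are comonoid homomorphisms for the canonical copy/delete comonoids are exactly the linearizations of functions S → T. -/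
open Matrix BigOperators

theorem stmt19 {S T : Type*} [Fintype S] [Fintype T] [DecidableEq T]
    (F : Matrix T S ℂ)
    (hcopy : ∀ (s : S) (t t' : T), F t s * F t' s = if t = t' then F t s else 0)
    (hdel : ∀ s : S, ∑ t : T, F t s = 1) :
    ∃ f : S → T, ∀ (t : T) (s : S), F t s = if t = f s then 1 else 0 := by
  have h01 : ∀ s t, F t s = 0 ∨ F t s = 1 := by
    intro s t
    have := hcopy s t t
    simp at this
    have h' : F t s * (F t s - 1) = 0 := by ring_nf; linear_combination this
    rcases mul_eq_zero.mp h' with h | h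
    · exact Or.inl h
    · exact Or.inr (sub_eq_zero.mp h)
  have hex : ∀ s, ∃ t, F t s = 1 := by
    intro s
    by_contra h
    push_neg at h
    have : ∑ t : T, F t s = 0 := by
      apply Finset.sum_eq_zero
      intro t _
      rcases h01 s t with h0 | h1
      · exact h0
      · exact absurd h1 (h t)
    rw [hdel s] at this
    exact one_ne_zero this
  choose f hf using hex
  refine ⟨f, fun t s => ?_⟩
  by_cases h : t = f s
  · rw [if_pos h, h, hf s]
  · rw [if_neg h]
    have := hcopy s t (f s)
    rw [if_neg h, hf s, mul_one] at this
    exact this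
end
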